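/- Let T be a bounded operator on a complex Hilbert space H and q a complex number with |q| ≤ 1. Then w_q(T) ≤ ( |q|²·w(T)² + (1−|q|²)·‖T‖² + 2|q|√(1−|q|²)·w(T)·‖T‖ )^{1/2}, where w(T) is the classical numerical radius and w_q(T) the q-numerical radius. -/

import Mathlib

/-!
Given unit vectors `x`, `y` with `⟪y, x⟫ = q`, split `y = conj q • x + z` with `z ⟂ x`, so that
`‖z‖ = √(1 - |q|²)`. Then `⟪y, T x⟫ = q ⟪x, T x⟫ + ⟪z, T x⟫` has modulus at most
`|q| w(T) + √(1 - |q|²) ‖T‖`, and the right-hand side of the theorem is exactly the square root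
of the square of this bound.
-/

open scoped InnerProductSpace

variable {H : Type*} [NormedAddCommGroup H] [InnerProductSpace ℂ H] [CompleteSpace H]

/-- The `q`-numerical radius of `T`. -/
noncomputable def wq (T : H →L[ℂ] H) (q : ℂ) : ℝ :=
  sSup {r : ℝ | ∃ x y : H, ‖x‖ = 1 ∧ ‖y‖ = 1 ∧ (@inner ℂ H _ y x) = q ∧
    r = ‖@inner ℂ H _ y (T x)‖}

/-- The classical numerical radius of `T`. -/
noncomputable def wnum (T : H →L[ℂ] H) : ℝ :=
  sSup {r : ℝ | ∃ x : H, ‖x‖ = 1 ∧ r = ‖@inner ℂ H _ x (T x)‖}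

section

variable {E : Type*} [NormedAddCommGroup E] [InnerProductSpace ℂ E]

lemma norm_inner_apply_le_opNorm (T : E →L[ℂ] E) {x y : E} (hx : ‖x‖ = 1) :
    ‖⟪y, T x⟫_ℂ‖ ≤ ‖y‖ * ‖T‖ :=
  calc ‖⟪y, T x⟫_ℂ‖ ≤ ‖y‖ * ‖T x‖ := norm_inner_le_norm y (T x)
    _ ≤ ‖y‖ * ‖T‖ := by
      gcongr
      simpa [hx] using T.le_opNorm x

lemma norm_inner_self_apply_le_wnum (T : E →L[ℂ] E) {x : E} (hx : ‖x‖ = 1) :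
    ‖⟪x, T x⟫_ℂ‖ ≤ wnum T := by
  refine le_csSup ⟨‖T‖, ?_⟩ ⟨x, hx, rfl⟩
  rintro r ⟨z, hz, rfl⟩
  simpa [hz] using norm_inner_apply_le_opNorm T (y := z) hz

lemma wnum_nonneg (T : E →L[ℂ] E) : 0 ≤ wnum T :=
  Real.sSup_nonneg <| by
    rintro r ⟨x, -, rfl⟩
    exact norm_nonneg _

lemma inner_sub_inner_smul_right_eq_zero {x : E} (hx : ‖x‖ = 1) (y : E) :
    ⟪x, y - ⟪x, y⟫_ℂ • x⟫_ℂ = 0 := by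
  rw [inner_sub_right, inner_smul_right, inner_self_eq_norm_sq_to_K, hx]
  simp

lemma norm_sub_inner_smul_sq {x : E} (hx : ‖x‖ = 1) (y : E) :
    ‖y - ⟪x, y⟫_ℂ • x‖ ^ 2 = ‖y‖ ^ 2 - ‖⟪x, y⟫_ℂ‖ ^ 2 := by
  have horth : ⟪⟪x, y⟫_ℂ • x, y - ⟪x, y⟫_ℂ • x⟫_ℂ = 0 := by
    rw [inner_smul_left, inner_sub_inner_smul_right_eq_zero hx, mul_zero]
  have hpyth := norm_add_sq_eq_norm_sq_add_norm_sq_of_inner_eq_zero _ _ horth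
  rw [add_sub_cancel, norm_smul, hx, mul_one] at hpyth
  linarith

lemma norm_inner_apply_le_of_norm_eq_one (T : E →L[ℂ] E) {x y : E} (hx : ‖x‖ = 1)
    (hy : ‖y‖ = 1) :
    ‖⟪y, T x⟫_ℂ‖ ≤ ‖⟪y, x⟫_ℂ‖ * wnum T + √(1 - ‖⟪y, x⟫_ℂ‖ ^ 2) * ‖T‖ := by
  set z := y - ⟪x, y⟫_ℂ • x
  have hz : ‖z‖ = √(1 - ‖⟪y, x⟫_ℂ‖ ^ 2) := by
    rw [← Real.sqrt_sq (norm_nonneg z), norm_sub_inner_smul_sq hx, hy, one_pow,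
      ← norm_inner_symm]
  have hdecomp : ⟪y, T x⟫_ℂ = ⟪y, x⟫_ℂ * ⟪x, T x⟫_ℂ + ⟪z, T x⟫_ℂ := by
    rw [inner_sub_left, inner_smul_left, inner_conj_symm]
    ring
  calc ‖⟪y, T x⟫_ℂ‖ ≤ ‖⟪y, x⟫_ℂ‖ * ‖⟪x, T x⟫_ℂ‖ + ‖⟪z, T x⟫_ℂ‖ := by
        rw [hdecomp, ← norm_mul]
        exact norm_add_le _ _
    _ ≤ ‖⟪y, x⟫_ℂ‖ * wnum T + √(1 - ‖⟪y, x⟫_ℂ‖ ^ 2) * ‖T‖ := by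
        gcongr
        · exact norm_inner_self_apply_le_wnum T hx
        · exact hz ▸ norm_inner_apply_le_opNorm T hx

end

lemma sq_mul_add_sqrt_one_sub_sq_mul {a : ℝ} (ha : a ^ 2 ≤ 1) (u v : ℝ) :
    (a * u + √(1 - a ^ 2) * v) ^ 2 =
      a ^ 2 * u ^ 2 + (1 - a ^ 2) * v ^ 2 + 2 * a * √(1 - a ^ 2) * u * v := by
  have hs : √(1 - a ^ 2) ^ 2 = 1 - a ^ 2 := Real.sq_sqrt (by linarith)
  linear_combination v ^ 2 * hs

theorem stmt6_general (T : H →L[ℂ] H)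
    (q : ℂ) (hq : ‖q‖ ≤ 1) :
    wq T q ≤
      Real.sqrt (‖q‖ ^ 2 * (wnum T) ^ 2 + (1 - ‖q‖ ^ 2) * ‖T‖ ^ 2 +
        2 * ‖q‖ * Real.sqrt (1 - ‖q‖ ^ 2) * wnum T * ‖T‖) := by
  have hq2 : ‖q‖ ^ 2 ≤ 1 := pow_le_one₀ (norm_nonneg q) hq
  have hbound : 0 ≤ ‖q‖ * wnum T + √(1 - ‖q‖ ^ 2) * ‖T‖ := by
    have := wnum_nonneg T
    positivity
  rw [← sq_mul_add_sqrt_one_sub_sq_mul hq2, Real.sqrt_sq hbound]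
  refine Real.sSup_le ?_ hbound
  rintro r ⟨x, y, hx, hy, rfl, rfl⟩
  exact norm_inner_apply_le_of_norm_eq_one T hx hy

theorem stmt6 (hdim : 2 ≤ Module.rank ℂ H) (T : H →L[ℂ] H)
    (q : ℂ) (hq : ‖q‖ ≤ 1) :
    wq T q ≤
      Real.sqrt (‖q‖ ^ 2 * (wnum T) ^ 2 + (1 - ‖q‖ ^ 2) * ‖T‖ ^ 2 +
        2 * ‖q‖ * Real.sqrt (1 - ‖q‖ ^ 2) * wnum T * ‖T‖) :=
  stmt6_general T q hq
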